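/- Let q be an odd prime power, let d ≥ 6, let 𝓔 ⊆ F_q^d be a finite set with |𝓔| ≥ 313·q^(d/2) (real exponent d/2), and let r ∈ F_q. If |P_1(r)| > 1.26844 · |𝓔|^(11/3) (an inequality of real numbers, with real exponent 11/3), then 𝓔 contains a pair of 4-paths with dilation ratio r. -/

import Mathlib

/-!
Elements of `P_1(r)` are the ordered edges of the graph on `𝓔 × 𝓔` in which
`(x, y) ~ (x', y')` iff `‖y' − y‖ = r‖x' − x‖ ≠ 0`. As `|𝓔| ≥ 313`, the hypothesis gives
`|P_1(r)| > 16|𝓔|³`: the average degree on these `|𝓔|²` vertices exceeds `16|𝓔|`. Repeatedly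
deleting vertices of degree at most `8|𝓔|` leaves a nonempty subgraph of minimum degree above
`8|𝓔|`. There a walk extends greedily four times: at most `4|𝓔|` neighbours reuse one of the
first coordinates already visited and at most `4|𝓔|` reuse a second one, so a fresh neighbour
always exists, and the first and second coordinates of the walk form the pair of 4-paths.
-/

/-- `norm2 x = x₁² + ⋯ + x_d²` for `x ∈ F_q^d`. -/
def norm2 {F : Type*} [Field F] {d : ℕ} (x : Fin d → F) : F := ∑ i, x i ^ 2

/-- `𝓔` contains a pair of `k`-stars with dilation ratio `r`: there are distinct
`x₁, …, x_{k+1} ∈ 𝓔` and distinct `y₁, …, y_{k+1} ∈ 𝓔` with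
`‖y_i − y₁‖ = r‖x_i − x₁‖ ≠ 0` for `i = 2, …, k+1`. -/
def ContainsPairOfStars {F : Type*} [Field F] {d : ℕ}
    (𝓔 : Finset (Fin d → F)) (k : ℕ) (r : F) : Prop :=
  ∃ x y : Fin (k + 1) → (Fin d → F),
    Function.Injective x ∧ Function.Injective y ∧
    (∀ i, x i ∈ 𝓔) ∧ (∀ i, y i ∈ 𝓔) ∧
    ∀ i : Fin (k + 1), i ≠ 0 →
      norm2 (y i - y 0) = r * norm2 (x i - x 0) ∧ r * norm2 (x i - x 0) ≠ 0

/-- `𝓔` contains a pair of `k`-paths with dilation ratio `r`: there are distinct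
`x₁, …, x_{k+1} ∈ 𝓔` and distinct `y₁, …, y_{k+1} ∈ 𝓔` with
`‖y_{i+1} − y_i‖ = r‖x_{i+1} − x_i‖ ≠ 0` for `i = 1, …, k`. -/
def ContainsPairOfPaths {F : Type*} [Field F] {d : ℕ}
    (𝓔 : Finset (Fin d → F)) (k : ℕ) (r : F) : Prop :=
  ∃ x y : Fin (k + 1) → (Fin d → F),
    Function.Injective x ∧ Function.Injective y ∧
    (∀ i, x i ∈ 𝓔) ∧ (∀ i, y i ∈ 𝓔) ∧
    ∀ i : Fin k,
      norm2 (y i.succ - y i.castSucc) = r * norm2 (x i.succ - x i.castSucc) ∧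
      r * norm2 (x i.succ - x i.castSucc) ≠ 0

open scoped Classical

/-- `P_k(r)`: tuples `(x₁, …, x_{k+1}, y₁, …, y_{k+1}) ∈ 𝓔^{2k+2}` with
`‖y_{i+1} − y_i‖ = r‖x_{i+1} − x_i‖ ≠ 0` for all `i = 1, …, k`. -/

noncomputable def Pset {F : Type*} [Field F] [Fintype F] {d : ℕ}
    (𝓔 : Finset (Fin d → F)) (k : ℕ) (r : F) :
    Finset ((Fin (k + 1) → Fin d → F) × (Fin (k + 1) → Fin d → F)) :=
  Finset.univ.filter fun p =>
    (∀ i, p.1 i ∈ 𝓔) ∧ (∀ i, p.2 i ∈ 𝓔) ∧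
    ∀ i : Fin k,
      norm2 (p.2 i.succ - p.2 i.castSucc) = r * norm2 (p.1 i.succ - p.1 i.castSucc) ∧
      r * norm2 (p.1 i.succ - p.1 i.castSucc) ≠ 0

open Finset

section DenseSubset

variable {α : Type*} [DecidableEq α] {adj : α → α → Prop} [DecidableRel adj] [Std.Symm adj]

lemma card_filter_adj_le_card_filter_adj_erase_add (S : Finset α) (u : α) :
    #{p ∈ S ×ˢ S | adj p.1 p.2} ≤
      #{p ∈ S.erase u ×ˢ S.erase u | adj p.1 p.2} + 2 * #{v ∈ S | adj u v} := by
  set N := {v ∈ S | adj u v}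
  have hsub : {p ∈ S ×ˢ S | adj p.1 p.2} ⊆
      {p ∈ S.erase u ×ˢ S.erase u | adj p.1 p.2} ∪ ({u} ×ˢ N ∪ N ×ˢ {u}) := by
    rintro ⟨a, b⟩ hab
    simp only [mem_filter, mem_product, mem_union, mem_erase, mem_singleton, N] at hab ⊢
    by_cases ha : a = u
    · subst ha; tauto
    have hba : adj b a := symm hab.2
    by_cases hb : b = u
    · subst hb; tauto
    · tauto
  calc #{p ∈ S ×ˢ S | adj p.1 p.2}
      ≤ #({p ∈ S.erase u ×ˢ S.erase u | adj p.1 p.2} ∪ ({u} ×ˢ N ∪ N ×ˢ {u})) :=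
        card_le_card hsub
    _ ≤ #{p ∈ S.erase u ×ˢ S.erase u | adj p.1 p.2} + (#({u} ×ˢ N) + #(N ×ˢ {u})) :=
        (card_union_le _ _).trans (Nat.add_le_add_left (card_union_le _ _) _)
    _ = _ := by simp only [card_product, card_singleton]; ring

lemma exists_nonempty_subset_forall_lt_two_mul_card_filter_adj (c : ℕ)
    (S : Finset α) (hS : c * #S < #{p ∈ S ×ˢ S | adj p.1 p.2}) :
    ∃ T ⊆ S, T.Nonempty ∧ ∀ u ∈ T, c < 2 * #{v ∈ T | adj u v} := by
  induction S using Finset.strongInduction with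
  | _ S ih =>
    by_cases hmin : ∀ u ∈ S, c < 2 * #{v ∈ S | adj u v}
    · refine ⟨S, subset_rfl, ?_, hmin⟩
      rw [nonempty_iff_ne_empty]
      rintro rfl
      simp at hS
    push Not at hmin
    obtain ⟨u, hu, hlow⟩ := hmin
    -- deleting `u` loses one vertex but at most `c` ordered edges
    have herase : c * #(S.erase u) < #{p ∈ S.erase u ×ˢ S.erase u | adj p.1 p.2} := by
      have := card_filter_adj_le_card_filter_adj_erase_add (adj := adj) S u
      have hcard : #(S.erase u) + 1 = #S := card_erase_add_one hu
      nlinarith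
    obtain ⟨T, hT, hne, hdeg⟩ := ih _ (erase_ssubset hu) herase
    exact ⟨T, hT.trans (erase_subset u S), hne, hdeg⟩

end DenseSubset

section PairPaths

variable {α β : Type*} [DecidableEq α] [DecidableEq β]

lemma card_filter_fst_mem_or_snd_mem_le {A X : Finset α} {B Y : Finset β}
    {T : Finset (α × β)} (hT : T ⊆ A ×ˢ B) :
    #{v ∈ T | v.1 ∈ X ∨ v.2 ∈ Y} ≤ #X * #B + #A * #Y := by
  calc #{v ∈ T | v.1 ∈ X ∨ v.2 ∈ Y} ≤ #(X ×ˢ B ∪ A ×ˢ Y) := by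
        refine card_le_card fun v hv => ?_
        obtain ⟨hvT, hv⟩ := mem_filter.mp hv
        have := mem_product.mp (hT hvT)
        rcases hv with h | h
        · exact mem_union_left _ (mem_product.mpr ⟨h, this.2⟩)
        · exact mem_union_right _ (mem_product.mpr ⟨this.1, h⟩)
    _ ≤ #X * #B + #A * #Y := by
        simpa only [card_product] using card_union_le (X ×ˢ B) (A ×ˢ Y)

variable {adj : α × β → α × β → Prop} [DecidableRel adj] {A : Finset α} {B : Finset β}
  {T : Finset (α × β)}

lemma exists_adj_fst_notMem_snd_notMem (hT : T ⊆ A ×ˢ B) {u : α × β} {X : Finset α}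
    {Y : Finset β} (hdeg : #X * #B + #A * #Y < #{v ∈ T | adj u v}) :
    ∃ v ∈ T, adj u v ∧ v.1 ∉ X ∧ v.2 ∉ Y := by
  have hbad : #{v ∈ {v ∈ T | adj u v} | v.1 ∈ X ∨ v.2 ∈ Y} ≤ #X * #B + #A * #Y :=
    card_filter_fst_mem_or_snd_mem_le ((filter_subset _ _).trans hT)
  have hsplit := card_filter_add_card_filter_not (s := {v ∈ T | adj u v})
    (fun v => v.1 ∈ X ∨ v.2 ∈ Y)
  obtain ⟨v, hv⟩ : ({v ∈ {v ∈ T | adj u v} | ¬(v.1 ∈ X ∨ v.2 ∈ Y)}).Nonempty := by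
    rw [← card_pos]; omega
  simp only [mem_filter, not_or] at hv
  exact ⟨v, hv.1.1, hv.1.2, hv.2⟩

lemma exists_path_injective_fst_snd (hT : T ⊆ A ×ˢ B) (hne : T.Nonempty) {k : ℕ}
    (hdeg : ∀ u ∈ T, k * (#A + #B) < #{v ∈ T | adj u v}) :
    ∀ j ≤ k, ∃ p : Fin (j + 1) → α × β, Function.Injective (Prod.fst ∘ p) ∧
      Function.Injective (Prod.snd ∘ p) ∧ (∀ i, p i ∈ T) ∧
      ∀ i : Fin j, adj (p i.castSucc) (p i.succ) := by
  intro j hj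
  induction j with
  | zero =>
    obtain ⟨u, hu⟩ := hne
    exact ⟨fun _ => u, fun i j _ => Subsingleton.elim (α := Fin 1) i j,
      fun i j _ => Subsingleton.elim (α := Fin 1) i j, fun _ => hu, fun i => i.elim0⟩
  | succ j ih =>
    obtain ⟨p, hfst, hsnd, hpT, hpadj⟩ := ih (by omega)
    set u := p (Fin.last j)
    have hX : #(univ.image (Prod.fst ∘ p)) ≤ k := (card_image_le).trans (by simpa using hj)
    have hY : #(univ.image (Prod.snd ∘ p)) ≤ k := (card_image_le).trans (by simpa using hj)
    obtain ⟨v, hvT, huv, hvX, hvY⟩ := exists_adj_fst_notMem_snd_notMem (adj := adj) hT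
      (u := u) (X := univ.image (Prod.fst ∘ p)) (Y := univ.image (Prod.snd ∘ p))
      (lt_of_le_of_lt (by nlinarith) (hdeg u (hpT _)))
    refine ⟨Fin.snoc p v, ?_, ?_, ?_, ?_⟩
    · rw [Fin.comp_snoc, Fin.snoc_injective_iff]
      exact ⟨hfst, by simpa using hvX⟩
    · rw [Fin.comp_snoc, Fin.snoc_injective_iff]
      exact ⟨hsnd, by simpa using hvY⟩
    · intro i
      induction i using Fin.lastCases with
      | last => simpa using hvT
      | cast i => simpa using hpT i
    · intro i
      induction i using Fin.lastCases with
      | last => simpa using huv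
      | cast i => rw [Fin.succ_castSucc, Fin.snoc_castSucc, Fin.snoc_castSucc]; exact hpadj i

end PairPaths

section Dilation

variable {F : Type*} [Field F] {d : ℕ}

lemma norm2_sub_comm (x y : Fin d → F) : norm2 (x - y) = norm2 (y - x) := by
  simp only [norm2, Pi.sub_apply, ← neg_sub (x _), neg_sq]

def DilatedAdj (r : F) (u v : (Fin d → F) × (Fin d → F)) : Prop :=
  norm2 (v.2 - u.2) = r * norm2 (v.1 - u.1) ∧ r * norm2 (v.1 - u.1) ≠ 0

instance (r : F) : Std.Symm (DilatedAdj (d := d) r) where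
  symm u v h := by
    rw [DilatedAdj, norm2_sub_comm u.1, norm2_sub_comm u.2]
    exact h

lemma card_Pset_one [Fintype F] (𝓔 : Finset (Fin d → F)) (r : F) :
    #(Pset 𝓔 1 r) = #{p ∈ (𝓔 ×ˢ 𝓔) ×ˢ (𝓔 ×ˢ 𝓔) | DilatedAdj r p.1 p.2} := by
  refine card_nbij' (fun p => ((p.1 0, p.2 0), (p.1 1, p.2 1)))
    (fun q => (![q.1.1, q.2.1], ![q.1.2, q.2.2])) ?_ ?_ ?_ ?_
  · intro p hp
    simp_all [Pset, DilatedAdj, Fin.forall_fin_two]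
  · intro q hq
    simp_all [Pset, DilatedAdj, Fin.forall_fin_two]
  · intro p _
    ext i <;> fin_cases i <;> rfl
  · intro q _
    rfl

lemma containsPairOfPaths_of_forall_lt_card_filter {𝓔 : Finset (Fin d → F)} {r : F} {k : ℕ}
    {T : Finset ((Fin d → F) × (Fin d → F))} (hT : T ⊆ 𝓔 ×ˢ 𝓔) (hne : T.Nonempty)
    (hdeg : ∀ u ∈ T, 2 * k * #𝓔 < #{v ∈ T | DilatedAdj r u v}) :
    ContainsPairOfPaths 𝓔 k r := by
  obtain ⟨p, hfst, hsnd, hpT, hpadj⟩ := exists_path_injective_fst_snd hT hne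
    (fun u hu => (by ring : k * (#𝓔 + #𝓔) = 2 * k * #𝓔) ▸ hdeg u hu) k le_rfl
  exact ⟨Prod.fst ∘ p, Prod.snd ∘ p, hfst, hsnd, fun i => (mem_product.mp (hT (hpT i))).1,
    fun i => (mem_product.mp (hT (hpT i))).2, hpadj⟩

theorem containsPairOfPaths_of_card_Pset_one_gt [Fintype F] (𝓔 : Finset (Fin d → F)) (r : F)
    (k : ℕ) (hP : 4 * k * #𝓔 ^ 3 < #(Pset 𝓔 1 r)) : ContainsPairOfPaths 𝓔 k r := by
  have hedges : 4 * k * #𝓔 * #(𝓔 ×ˢ 𝓔) <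
      #{p ∈ (𝓔 ×ˢ 𝓔) ×ˢ (𝓔 ×ˢ 𝓔) | DilatedAdj r p.1 p.2} := by
    rw [← card_Pset_one, card_product]
    linarith
  obtain ⟨T, hT, hne, hdeg⟩ :=
    exists_nonempty_subset_forall_lt_two_mul_card_filter_adj (adj := DilatedAdj r) _ _ hedges
  exact containsPairOfPaths_of_forall_lt_card_filter hT hne fun u hu => by
    linarith [hdeg u hu]

end Dilation

lemma sixteen_mul_pow_three_lt_rpow {x : ℝ} (hx : 47 ≤ x) :
    16 * x ^ 3 < 1.26844 * x ^ ((11 : ℝ) / 3) := by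
  have hx0 : 0 < x := by linarith
  have hsplit : x ^ ((11 : ℝ) / 3) = x ^ 3 * x ^ ((2 : ℝ) / 3) := by
    rw [← Real.rpow_natCast x 3, ← Real.rpow_add hx0]
    norm_num
  have hroot : 13 ≤ x ^ ((2 : ℝ) / 3) := by
    have hcube : (x ^ ((2 : ℝ) / 3)) ^ 3 = x ^ 2 := by
      rw [← Real.rpow_natCast _ 3, ← Real.rpow_mul hx0.le, ← Real.rpow_natCast x 2]
      norm_num
    refine le_of_pow_le_pow_left₀ three_ne_zero (Real.rpow_nonneg hx0.le _) ?_
    rw [hcube]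
    nlinarith
  rw [hsplit]
  nlinarith [pow_pos hx0 3]

theorem paths_of_Pset_one_large_high_dim_general {F : Type*} [Field F] [Fintype F]
    {d : ℕ}
    (𝓔 : Finset (Fin d → F)) (r : F)
    (hcard : 313 * (Fintype.card F : ℝ) ^ ((d : ℝ) / 2) ≤ (𝓔.card : ℝ))
    (hP : 1.26844 * (𝓔.card : ℝ) ^ ((11 : ℝ) / 3) < ((Pset 𝓔 1 r).card : ℝ)) :
    ContainsPairOfPaths 𝓔 4 r := by
  have hq : 1 ≤ (Fintype.card F : ℝ) ^ ((d : ℝ) / 2) :=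
    Real.one_le_rpow (by exact_mod_cast Fintype.card_pos) (by positivity)
  have hlarge : (47 : ℝ) ≤ #𝓔 := by linarith
  apply containsPairOfPaths_of_card_Pset_one_gt 𝓔 r 4
  exact_mod_cast (sixteen_mul_pow_three_lt_rpow hlarge).trans hP

/-- For `d ≥ 6`, if `|𝓔| ≥ 313·q^(d/2)` and
`|P_1(r)| > 1.26844·|𝓔|^(11/3)`, then `𝓔` contains a pair of `4`-paths with
dilation ratio `r`. -/
theorem paths_of_Pset_one_large_high_dim {F : Type*} [Field F] [Fintype F]
    (hodd : Odd (Fintype.card F))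
    {d : ℕ} (hd : 6 ≤ d)
    (𝓔 : Finset (Fin d → F)) (r : F)
    (hcard : 313 * (Fintype.card F : ℝ) ^ ((d : ℝ) / 2) ≤ (𝓔.card : ℝ))
    (hP : 1.26844 * (𝓔.card : ℝ) ^ ((11 : ℝ) / 3) < ((Pset 𝓔 1 r).card : ℝ)) :
    ContainsPairOfPaths 𝓔 4 r :=
  paths_of_Pset_one_large_high_dim_general 𝓔 r hcard hP
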